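/- arXiv:0810.4438 — 7 statements merged into one kernel-verified Lean document; each statement's English description precedes it below -/
import Mathlib

section
/- Let 0 < h < 1 be a constant, and let δ > 2h, M > 0, β > 0, ε ∈ (0,1). Then there exists a positive finite constant c, depending only on δ, ε, β, M, such that for all 0 < a ≤ M: ∫_ε^1 ∫_ε^1 (a + |s - r|^{2h})^{-β} ds dr ≤ c(a^{-(β - 1/δ)} + 1). -/
/-!
Write `x = |s - r| ^ (2h)` and `θ = min β (1/δ)`. Splitting the exponent as
`(a + x)^(-β) = (a + x)^(-(β - θ)) (a + x)^(-θ) ≤ a^(-(β - θ)) x^(-θ)` leaves the singularity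
`|s - r|^(-2hθ)`, which is integrable since `2hθ ≤ 2h/δ < 1`. Hence the double integral is at most
a constant times `a^(-(β - θ))`, and `a^(-(β - θ))` is `1` when `θ = β` and `a^(-(β - 1/δ))`
otherwise.
-/

open MeasureTheory intervalIntegral Set

lemma intervalIntegrable_abs_rpow {γ : ℝ} (hγ : -1 < γ) (a b : ℝ) :
    IntervalIntegrable (fun u : ℝ => |u| ^ γ) volume a b := by
  have of_nonneg : ∀ c : ℝ, 0 ≤ c → IntervalIntegrable (fun u : ℝ => |u| ^ γ) volume 0 c := by
    intro c hc
    have h := intervalIntegrable_rpow' (a := 0) (b := c) hγ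
    rw [intervalIntegrable_iff, uIoc_of_le hc] at h ⊢
    exact h.congr_fun (fun u hu => by rw [abs_of_pos hu.1]) measurableSet_Ioc
  have from_zero : ∀ c : ℝ, IntervalIntegrable (fun u : ℝ => |u| ^ γ) volume 0 c := by
    intro c
    rcases le_total 0 c with hc | hc
    · exact of_nonneg c hc
    · rw [IntervalIntegrable.iff_comp_neg]
      simpa only [abs_neg, neg_zero] using of_nonneg (-c) (by linarith)
  exact (from_zero a).symm.trans (from_zero b)

lemma integral_abs_sub_rpow_le {γ p q r : ℝ} (hγ : -1 < γ) (hr : r ∈ Icc p q) :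
    ∫ s in p..q, |s - r| ^ γ ≤ ∫ u in -(q - p)..(q - p), |u| ^ γ := by
  rw [integral_comp_sub_right (fun u => |u| ^ γ) r]
  exact integral_mono_interval (by linarith [hr.2]) (by linarith [hr.1, hr.2])
    (by linarith [hr.1]) (.of_forall fun u => by positivity) (intervalIntegrable_abs_rpow hγ _ _)

lemma add_rpow_neg_le {a x β θ : ℝ} (ha : 0 < a) (hx : 0 < x) (hθ : 0 ≤ θ) (hθβ : θ ≤ β) :
    (a + x) ^ (-β) ≤ a ^ (-(β - θ)) * x ^ (-θ) := by
  have hax : 0 < a + x := by positivity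
  calc (a + x) ^ (-β) = (a + x) ^ (-(β - θ)) * (a + x) ^ (-θ) := by
        rw [← Real.rpow_add hax]; ring_nf
    _ ≤ a ^ (-(β - θ)) * x ^ (-θ) :=
        mul_le_mul (Real.rpow_le_rpow_of_nonpos ha (by linarith) (by linarith))
          (Real.rpow_le_rpow_of_nonpos hx (by linarith) (by linarith))
          (by positivity) (by positivity)

lemma integral_add_abs_sub_rpow_neg_le {a α β θ p q r : ℝ} (ha : 0 < a) (hα : 0 < α)
    (hθ : 0 ≤ θ) (hθβ : θ ≤ β) (hαθ : α * θ < 1) (hr : r ∈ Icc p q) :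
    ∫ s in p..q, (a + |s - r| ^ α) ^ (-β) ≤
      a ^ (-(β - θ)) * ∫ u in -(q - p)..(q - p), |u| ^ (-(α * θ)) := by
  have hγ : -1 < -(α * θ) := by linarith
  have hcont : Continuous fun s : ℝ => (a + |s - r| ^ α) ^ (-β) :=
    (continuous_const.add ((continuous_abs.comp (continuous_id.sub continuous_const)).rpow_const
      fun _ => Or.inr hα.le)).rpow_const fun s => Or.inl (add_pos_of_pos_of_nonneg ha (Real.rpow_nonneg (abs_nonneg _) _)).ne'
  have hsing : IntervalIntegrable (fun s => a ^ (-(β - θ)) * |s - r| ^ (-(α * θ))) volume p q := by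
    have h := (intervalIntegrable_abs_rpow hγ (p - r) (q - r)).comp_sub_right r
    simp only [sub_add_cancel] at h
    exact h.const_mul _
  have hbound : (fun s => (a + |s - r| ^ α) ^ (-β)) ≤ᵐ[volume]
      fun s => a ^ (-(β - θ)) * |s - r| ^ (-(α * θ)) := by
    filter_upwards [compl_mem_ae_iff.2 (measure_singleton r)] with s hs
    have hsr : 0 < |s - r| := abs_pos.2 (sub_ne_zero.2 hs)
    rw [← mul_neg, Real.rpow_mul hsr.le]
    exact add_rpow_neg_le ha (by positivity) hθ hθβ
  calc ∫ s in p..q, (a + |s - r| ^ α) ^ (-β)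
      ≤ ∫ s in p..q, a ^ (-(β - θ)) * |s - r| ^ (-(α * θ)) :=
        integral_mono_ae (hr.1.trans hr.2) (hcont.intervalIntegrable _ _) hsing hbound
    _ = a ^ (-(β - θ)) * ∫ s in p..q, |s - r| ^ (-(α * θ)) := integral_const_mul _ _
    _ ≤ _ := mul_le_mul_of_nonneg_left (integral_abs_sub_rpow_le hγ hr) (by positivity)

lemma integral_integral_add_abs_sub_rpow_neg_le {a α β θ p q : ℝ} (ha : 0 < a) (hα : 0 < α)
    (hθ : 0 ≤ θ) (hθβ : θ ≤ β) (hαθ : α * θ < 1) (hpq : p ≤ q) :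
    ∫ r in p..q, ∫ s in p..q, (a + |s - r| ^ α) ^ (-β) ≤
      (q - p) * (a ^ (-(β - θ)) * ∫ u in -(q - p)..(q - p), |u| ^ (-(α * θ))) := by
  have hinner : ∀ r ∈ uIoc p q, ‖∫ s in p..q, (a + |s - r| ^ α) ^ (-β)‖ ≤
      a ^ (-(β - θ)) * ∫ u in -(q - p)..(q - p), |u| ^ (-(α * θ)) := by
    intro r hr
    rw [uIoc_of_le hpq] at hr
    rw [Real.norm_eq_abs, abs_of_nonneg (integral_nonneg hpq fun s _ => by positivity)]
    exact integral_add_abs_sub_rpow_neg_le ha hα hθ hθβ hαθ (Ioc_subset_Icc_self hr)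
  -- bounding the norm needs no integrability of the outer integrand
  calc _ ≤ ‖∫ r in p..q, ∫ s in p..q, (a + |s - r| ^ α) ^ (-β)‖ := le_abs_self _
    _ ≤ _ * |q - p| := intervalIntegral.norm_integral_le_of_norm_le_const hinner
    _ = _ := by rw [abs_of_nonneg (sub_nonneg.2 hpq), mul_comm]

lemma rpow_neg_sub_min_le {a β κ : ℝ} (ha : 0 ≤ a) :
    a ^ (-(β - min β κ)) ≤ a ^ (-(β - κ)) + 1 := by
  rcases le_total β κ with h | h
  · rw [min_eq_left h, sub_self, neg_zero, Real.rpow_zero]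
    linarith [Real.rpow_nonneg ha (-(β - κ))]
  · rw [min_eq_right h]
    linarith

theorem stmt_5_general (h δ M β ε : ℝ) (hh0 : 0 < h) (hδ : 2 * h < δ)
    (hβ : 0 < β) (hε1 : ε < 1) :
    ∃ c : ℝ, 0 < c ∧ ∀ a : ℝ, 0 < a → a ≤ M →
      (∫ r in ε..1, ∫ s in ε..1, (a + |s - r| ^ (2 * h)) ^ (-β)) ≤
        c * (a ^ (-(β - 1 / δ)) + 1) := by
  set θ := min β (1 / δ)
  have hθ : 0 ≤ θ := le_min hβ.le (one_div_pos.2 (by linarith)).le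
  have hαθ : 2 * h * θ < 1 :=
    calc 2 * h * θ ≤ 2 * h * (1 / δ) := by gcongr; exact min_le_right _ _
      _ < 1 := by rw [mul_one_div, div_lt_one (by linarith)]; exact hδ
  set K := ∫ u in -(1 - ε)..(1 - ε), |u| ^ (-(2 * h * θ))
  have hK : 0 ≤ K := integral_nonneg (by linarith) fun u _ => by positivity
  have hε : 0 ≤ 1 - ε := by linarith
  refine ⟨(1 - ε) * K + 1, by positivity, fun a ha _ => ?_⟩
  calc (∫ r in ε..1, ∫ s in ε..1, (a + |s - r| ^ (2 * h)) ^ (-β))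
      ≤ (1 - ε) * (a ^ (-(β - θ)) * K) :=
        integral_integral_add_abs_sub_rpow_neg_le ha (by positivity) hθ (min_le_left _ _) hαθ
          hε1.le
    _ = (1 - ε) * K * a ^ (-(β - θ)) := by ring
    _ ≤ (1 - ε) * K * (a ^ (-(β - 1 / δ)) + 1) := by
        gcongr
        exact rpow_neg_sub_min_le ha.le
    _ ≤ ((1 - ε) * K + 1) * (a ^ (-(β - 1 / δ)) + 1) :=
        mul_le_mul_of_nonneg_right (by linarith) (by positivity)

theorem stmt_5 (h δ M β ε : ℝ) (hh0 : 0 < h) (hh1 : h < 1) (hδ : 2 * h < δ)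
    (hM : 0 < M) (hβ : 0 < β) (hε0 : 0 < ε) (hε1 : ε < 1) :
    ∃ c : ℝ, 0 < c ∧ ∀ a : ℝ, 0 < a → a ≤ M →
      (∫ r in ε..1, ∫ s in ε..1, (a + |s - r| ^ (2 * h)) ^ (-β)) ≤
        c * (a ^ (-(β - 1 / δ)) + 1) :=
  stmt_5_general h δ M β ε hh0 hδ hβ hε1
end

section
/- Let α, β, η > 0 with αβ > 1, and let J(A,B) = ∫_0^1 dt / ((A + t^α)^β (B + t)^η). Then there exist finite constants c₁, c₂ depending only on α, β, η such that for all A, B > 0 with A^{1/α} ≤ c₁ B, J(A,B) ≤ c₂ / (A^{β - 1/α} B^η). -/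
/-!
Since `(B + t) ^ η ≥ B ^ η`, it suffices to bound `∫₀¹ (A + t ^ α) ^ (-β)` by a multiple of
`A ^ (1/α - β)`. Split at `s = A ^ (1/α)`, where the two terms of `A + t ^ α` balance: on `[0, s]`
the integrand is at most `A ^ (-β)`, so that piece is at most `s A ^ (-β) = A ^ (1/α - β)`; beyond
`s` it is at most `t ^ (-αβ)`, which is integrable at infinity because `αβ > 1`, with tail
`s ^ (1 - αβ) / (αβ - 1) = A ^ (1/α - β) / (αβ - 1)`.
-/

open MeasureTheory intervalIntegral Real Set

section

variable {α β A : ℝ}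

lemma add_rpow_pos (hA : 0 < A) {t : ℝ} (ht : 0 ≤ t) : 0 < A + t ^ α :=
  add_pos_of_pos_of_nonneg hA (rpow_nonneg ht α)

lemma continuousOn_add_rpow_rpow (hα : 0 ≤ α) (hA : 0 < A) (β : ℝ) :
    ContinuousOn (fun t : ℝ => (A + t ^ α) ^ β) (Ici 0) :=
  (continuousOn_const.add (continuousOn_id.rpow_const fun _ _ => Or.inr hα)).rpow_const
    fun _ ht => Or.inl (add_rpow_pos hA ht).ne'

lemma intervalIntegrable_one_div_add_rpow_rpow (hα : 0 ≤ α) (hA : 0 < A) (β : ℝ)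
    {a b : ℝ} (ha : 0 ≤ a) (hab : a ≤ b) :
    IntervalIntegrable (fun t : ℝ => 1 / (A + t ^ α) ^ β) volume a b :=
  ((continuousOn_const.div (continuousOn_add_rpow_rpow hα hA β)
    fun _ ht => (rpow_pos_of_pos (add_rpow_pos hA ht) β).ne').mono
    (Icc_subset_Ici_self.trans (Ici_subset_Ici.mpr ha))).intervalIntegrable_of_Icc hab

lemma one_div_add_rpow_rpow_le_rpow_neg (hβ : 0 ≤ β) (hA : 0 < A) {t : ℝ} (ht : 0 ≤ t) :
    1 / (A + t ^ α) ^ β ≤ A ^ (-β) := by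
  rw [rpow_neg hA.le, ← one_div]
  gcongr
  exact le_add_of_nonneg_right (rpow_nonneg ht α)

lemma one_div_add_rpow_rpow_le_rpow_neg_mul (hβ : 0 ≤ β) (hA : 0 ≤ A) {t : ℝ} (ht : 0 < t) :
    1 / (A + t ^ α) ^ β ≤ t ^ (-(α * β)) := by
  rw [← mul_neg, rpow_mul ht.le, rpow_neg (rpow_nonneg ht.le _), ← one_div]
  gcongr
  exact le_add_of_nonneg_left hA

lemma integral_rpow_neg_le {p s b : ℝ} (hp : 1 < p) (hs : 0 < s) (hsb : s ≤ b) :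
    ∫ t in s..b, t ^ (-p) ≤ s ^ (1 - p) / (p - 1) := by
  rw [integral_rpow (Or.inr ⟨by linarith, notMem_uIcc_of_lt hs (hs.trans_le hsb)⟩),
    neg_add_eq_sub, show 1 - p = -(p - 1) by ring, div_neg, ← neg_div, neg_sub]
  gcongr
  exact sub_le_self _ (rpow_nonneg (hs.le.trans hsb) _)

theorem integral_one_div_add_rpow_rpow_le (hα : 0 < α) (hαβ : 1 < α * β) (hA : 0 < A)
    {b : ℝ} (hb : 0 ≤ b) :
    ∫ t in 0..b, 1 / (A + t ^ α) ^ β ≤ α * β / (α * β - 1) * A ^ (1 / α - β) := by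
  have hβ : 0 ≤ β := (pos_of_mul_pos_right (one_pos.trans hαβ) hα.le).le
  have hαβ' : 0 < α * β - 1 := by linarith
  set s := A ^ (1 / α) with hs_def
  have hs : 0 < s := rpow_pos_of_pos hA _
  have head : ∀ c ∈ Icc 0 s, ∫ t in 0..c, 1 / (A + t ^ α) ^ β ≤ A ^ (1 / α - β) := by
    intro c hc
    calc ∫ t in 0..c, 1 / (A + t ^ α) ^ β ≤ ∫ t in 0..c, A ^ (-β) :=
          integral_mono_on hc.1 (intervalIntegrable_one_div_add_rpow_rpow hα.le hA β le_rfl hc.1)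
            intervalIntegrable_const fun t ht => one_div_add_rpow_rpow_le_rpow_neg hβ hA ht.1
      _ = c * A ^ (-β) := by simp
      _ ≤ s * A ^ (-β) := by gcongr; exact hc.2
      _ = A ^ (1 / α - β) := by rw [← rpow_add hA, sub_eq_add_neg]
  rcases le_total b s with hbs | hsb
  · calc ∫ t in 0..b, 1 / (A + t ^ α) ^ β ≤ A ^ (1 / α - β) := head b ⟨hb, hbs⟩
      _ ≤ α * β / (α * β - 1) * A ^ (1 / α - β) :=
        le_mul_of_one_le_left (rpow_nonneg hA.le _) ((one_le_div hαβ').mpr (by linarith))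
  have tail : ∫ t in s..b, 1 / (A + t ^ α) ^ β ≤ A ^ (1 / α - β) / (α * β - 1) :=
    calc ∫ t in s..b, 1 / (A + t ^ α) ^ β ≤ ∫ t in s..b, t ^ (-(α * β)) :=
          integral_mono_on hsb (intervalIntegrable_one_div_add_rpow_rpow hα.le hA β hs.le hsb)
            (intervalIntegrable_rpow (Or.inr (notMem_uIcc_of_lt hs (hs.trans_le hsb))))
            fun t ht => one_div_add_rpow_rpow_le_rpow_neg_mul hβ hA.le (hs.trans_le ht.1)
      _ ≤ s ^ (1 - α * β) / (α * β - 1) := integral_rpow_neg_le hαβ hs hsb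
      _ = A ^ (1 / α - β) / (α * β - 1) := by
        rw [hs_def, ← rpow_mul hA.le]
        congr 2
        field_simp
  rw [← integral_add_adjacent_intervals
    (intervalIntegrable_one_div_add_rpow_rpow hα.le hA β le_rfl hs.le)
    (intervalIntegrable_one_div_add_rpow_rpow hα.le hA β hs.le hsb)]
  calc _ ≤ A ^ (1 / α - β) + A ^ (1 / α - β) / (α * β - 1) :=
        add_le_add (head s ⟨hs.le, le_rfl⟩) tail
    _ = α * β / (α * β - 1) * A ^ (1 / α - β) := by
        field_simp
        ring

lemma integral_one_div_mul_add_rpow_le (hα : 0 ≤ α) (hA : 0 < A) {B η b : ℝ} (hB : 0 < B)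
    (hη : 0 ≤ η) (hb : 0 ≤ b) :
    ∫ t in 0..b, 1 / ((A + t ^ α) ^ β * (B + t) ^ η) ≤
      B ^ (-η) * ∫ t in 0..b, 1 / (A + t ^ α) ^ β := by
  have hBt : ∀ t ∈ Ici (0 : ℝ), 0 < B + t := fun t ht => add_pos_of_pos_of_nonneg hB ht
  have hcont : ContinuousOn (fun t : ℝ => 1 / ((A + t ^ α) ^ β * (B + t) ^ η)) (Ici 0) :=
    continuousOn_const.div ((continuousOn_add_rpow_rpow hα hA β).mul
      ((continuousOn_const.add continuousOn_id).rpow_const fun t ht => Or.inl (hBt t ht).ne'))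
      fun t ht => (mul_pos (rpow_pos_of_pos (add_rpow_pos hA ht) β)
        (rpow_pos_of_pos (hBt t ht) η)).ne'
  rw [← intervalIntegral.integral_const_mul]
  refine integral_mono_on hb ((hcont.mono Icc_subset_Ici_self).intervalIntegrable_of_Icc hb)
    ((intervalIntegrable_one_div_add_rpow_rpow hα hA β le_rfl hb).const_mul _) fun t ht => ?_
  have hX : 0 < (A + t ^ α) ^ β := rpow_pos_of_pos (add_rpow_pos hA ht.1) β
  rw [← one_div_mul_one_div, mul_comm, rpow_neg hB.le, ← one_div]
  gcongr
  exact le_add_of_nonneg_right ht.1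

end

theorem stmt_6_general (α β η : ℝ) (hα : 0 < α) (hη : 0 < η) (hαβ : 1 < α * β) :
    ∃ c₁ c₂ : ℝ, 0 < c₁ ∧ 0 < c₂ ∧ ∀ A B : ℝ, 0 < A → 0 < B → A ^ (1 / α) ≤ c₁ * B →
      (∫ t in (0:ℝ)..1, 1 / ((A + t ^ α) ^ β * (B + t) ^ η)) ≤
        c₂ / (A ^ (β - 1 / α) * B ^ η) := by
  have hαβ' : 0 < α * β - 1 := by linarith
  refine ⟨1, α * β / (α * β - 1), one_pos, by positivity, fun A B hA hB _ => ?_⟩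
  calc ∫ t in (0:ℝ)..1, 1 / ((A + t ^ α) ^ β * (B + t) ^ η)
      ≤ B ^ (-η) * ∫ t in (0:ℝ)..1, 1 / (A + t ^ α) ^ β :=
        integral_one_div_mul_add_rpow_le hα.le hA hB hη.le zero_le_one
    _ ≤ B ^ (-η) * (α * β / (α * β - 1) * A ^ (1 / α - β)) :=
        mul_le_mul_of_nonneg_left (integral_one_div_add_rpow_rpow_le hα hαβ hA zero_le_one)
          (rpow_nonneg hB.le _)
    _ = α * β / (α * β - 1) / (A ^ (β - 1 / α) * B ^ η) := by
        rw [show 1 / α - β = -(β - 1 / α) by ring, rpow_neg hA.le, rpow_neg hB.le]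
        field_simp

theorem stmt_6 (α β η : ℝ) (hα : 0 < α) (hβ : 0 < β) (hη : 0 < η) (hαβ : 1 < α * β) :
    ∃ c₁ c₂ : ℝ, 0 < c₁ ∧ 0 < c₂ ∧ ∀ A B : ℝ, 0 < A → 0 < B → A ^ (1 / α) ≤ c₁ * B →
      (∫ t in (0:ℝ)..1, 1 / ((A + t ^ α) ^ β * (B + t) ^ η)) ≤
        c₂ / (A ^ (β - 1 / α) * B ^ η) :=
  stmt_6_general α β η hα hη hαβ
end

section
/- Let α, β, η > 0 with αβ = 1, and let J(A,B) = ∫_0^1 dt / ((A + t^α)^β (B + t)^η). Then there exist finite constants c₁, c₂ depending only on α, β, η such that for all A, B > 0 with A^{1/α} ≤ c₁ B, J(A,B) ≤ (c₂ / B^η) · log(1 + B A^{-1/α}). -/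
/-!
Since `α * β = 1`, `(A + t ^ α) ^ β ≥ max (A ^ β) t ≥ (A ^ β + t) / 2`, so with `a = A ^ (1 / α) ≤ B`
the integrand is at most `2 / ((a + t) * (B + t) ^ η)`. Enlarge the range of integration to
`[0, B + 1]` (this avoids comparing `B` with `1`). On `[0, B]` the integrand is at most
`B ^ (-η) / (a + t)`, which integrates to `B ^ (-η) * log (1 + B / a)`; on `[B, B + 1]` it is at
most `t ^ (-(η + 1))`, which integrates to at most `B ^ (-η) / η`, and `log (1 + B / a) ≥ log 2`
absorbs this term.
-/

open MeasureTheory intervalIntegral Set Real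

theorem intervalIntegral.integral_mono_on_of_nonneg {f g : ℝ → ℝ} {a b : ℝ} (hab : a ≤ b)
    (hg : IntervalIntegrable g volume a b) (hf : ∀ x ∈ Ioc a b, 0 ≤ f x)
    (hfg : ∀ x ∈ Ioc a b, f x ≤ g x) :
    ∫ x in a..b, f x ≤ ∫ x in a..b, g x := by
  rw [integral_of_le hab, integral_of_le hab]
  exact integral_mono_of_nonneg (ae_restrict_of_forall_mem measurableSet_Ioc hf)
    hg.1 (ae_restrict_of_forall_mem measurableSet_Ioc hfg)

theorem half_add_le_add_rpow_rpow {A t α β : ℝ} (hA : 0 ≤ A) (ht : 0 ≤ t) (hβ : 0 ≤ β)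
    (hαβ : α * β = 1) : (A ^ β + t) / 2 ≤ (A + t ^ α) ^ β := by
  have htα : 0 ≤ t ^ α := rpow_nonneg ht α
  have hA_le : A ^ β ≤ (A + t ^ α) ^ β := rpow_le_rpow hA (by linarith) hβ
  have ht_le : t ≤ (A + t ^ α) ^ β := by
    calc t = (t ^ α) ^ β := by rw [← rpow_mul ht, hαβ, rpow_one]
      _ ≤ (A + t ^ α) ^ β := rpow_le_rpow htα (by linarith) hβ
  linarith

section ModelIntegral

variable {a B η : ℝ}

theorem intervalIntegrable_inv_mul_rpow (ha : 0 < a) (hB : 0 < B) {c d : ℝ} (hc : 0 ≤ c)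
    (hd : 0 ≤ d) : IntervalIntegrable (fun t ↦ ((a + t) * (B + t) ^ η)⁻¹) volume c d := by
  refine ContinuousOn.intervalIntegrable fun t ht ↦ ContinuousAt.continuousWithinAt ?_
  have ht : 0 ≤ t := le_trans (le_min hc hd) ht.1
  have hat : 0 < a + t := by linarith
  have hBt : 0 < B + t := by linarith
  exact ((continuousAt_const.add continuousAt_id).mul
    ((continuousAt_const.add continuousAt_id).rpow_const (.inl hBt.ne'))).inv₀
    (mul_pos hat (rpow_pos_of_pos hBt η)).ne'

theorem integral_inv_mul_rpow_le_log (ha : 0 < a) (hB : 0 < B) (hη : 0 ≤ η) :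
    ∫ t in (0 : ℝ)..B, ((a + t) * (B + t) ^ η)⁻¹ ≤ log (1 + B / a) / B ^ η := by
  calc ∫ t in (0 : ℝ)..B, ((a + t) * (B + t) ^ η)⁻¹
      ≤ ∫ t in (0 : ℝ)..B, (a + t)⁻¹ / B ^ η := by
        refine integral_mono_on hB.le (intervalIntegrable_inv_mul_rpow ha hB le_rfl hB.le) ?_
          fun t ht ↦ ?_
        · refine (intervalIntegrable_inv (fun t ht ↦ ?_) (by fun_prop)).div_const _
          rw [uIcc_of_le hB.le] at ht
          linarith [ht.1]
        · have : B ^ η ≤ (B + t) ^ η := rpow_le_rpow hB.le (by linarith [ht.1]) hη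
          rw [div_eq_inv_mul, ← mul_inv, mul_comm]
          gcongr
          · have := ht.1; positivity
          · linarith [ht.1]
    _ = log (1 + B / a) / B ^ η := by
        rw [intervalIntegral.integral_div, integral_comp_add_left (fun t ↦ t⁻¹), add_zero,
          integral_inv_of_pos ha (by linarith)]
        congr 2
        field_simp

theorem integral_inv_mul_rpow_tail_le (ha : 0 < a) (hB : 0 < B) (hη : 0 < η) :
    ∫ t in B..B + 1, ((a + t) * (B + t) ^ η)⁻¹ ≤ 1 / (η * B ^ η) := by
  have hB1 : B ≤ B + 1 := by linarith
  have h0 : (0 : ℝ) ∉ uIcc B (B + 1) := by rw [uIcc_of_le hB1]; exact fun h ↦ hB.not_ge h.1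
  calc ∫ t in B..B + 1, ((a + t) * (B + t) ^ η)⁻¹
      ≤ ∫ t in B..B + 1, t ^ (-(η + 1)) := by
        refine integral_mono_on hB1
          (intervalIntegrable_inv_mul_rpow ha hB hB.le (by linarith))
          (intervalIntegral.intervalIntegrable_rpow (.inr h0)) fun t ht ↦ ?_
        have ht0 : 0 < t := hB.trans_le ht.1
        rw [rpow_neg ht0.le, rpow_add_one ht0.ne', mul_comm]
        gcongr
        · linarith
        · linarith
    _ = (B ^ (-η) - (B + 1) ^ (-η)) / η := by
        rw [integral_rpow (.inr ⟨by linarith, h0⟩), show -(η + 1) + 1 = -η by ring,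
          ← neg_div_neg_eq, neg_sub, neg_neg]
    _ ≤ B ^ (-η) / η := by
        gcongr
        linarith [rpow_nonneg (by linarith : (0:ℝ) ≤ B + 1) (-η)]
    _ = 1 / (η * B ^ η) := by rw [rpow_neg hB.le]; field_simp

theorem integral_inv_mul_rpow_le (ha : 0 < a) (haB : a ≤ B) (hη : 0 < η) :
    ∫ t in (0 : ℝ)..B + 1, ((a + t) * (B + t) ^ η)⁻¹ ≤ (log (1 + B / a) + 1 / η) / B ^ η := by
  have hB : 0 < B := ha.trans_le haB
  rw [← integral_add_adjacent_intervals (b := B)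
    (intervalIntegrable_inv_mul_rpow ha hB le_rfl hB.le)
    (intervalIntegrable_inv_mul_rpow ha hB hB.le (by linarith)), add_div, div_div]
  exact add_le_add (integral_inv_mul_rpow_le_log ha hB hη.le)
    (integral_inv_mul_rpow_tail_le ha hB hη)

end ModelIntegral

theorem one_div_rpow_mul_rpow_le_two_mul {A B t α β η : ℝ} (hA : 0 ≤ A) (hB : 0 ≤ B)
    (ht : 0 < t) (hβ : 0 ≤ β) (hαβ : α * β = 1) :
    1 / ((A + t ^ α) ^ β * (B + t) ^ η) ≤ 2 * ((A ^ β + t) * (B + t) ^ η)⁻¹ := by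
  have hhalf := half_add_le_add_rpow_rpow hA ht.le hβ hαβ
  have hAt : 0 < A ^ β + t := by linarith [rpow_nonneg hA β]
  have hBt : 0 < (B + t) ^ η := rpow_pos_of_pos (by linarith) η
  rw [← div_eq_mul_inv, div_le_div_iff₀ (mul_pos (by linarith) hBt) (mul_pos hAt hBt)]
  nlinarith

theorem integral_le_two_mul_integral_inv_mul_rpow {A B α β η : ℝ} (hA : 0 < A) (hB : 0 < B)
    (hβ : 0 ≤ β) (hαβ : α * β = 1) :
    ∫ t in (0 : ℝ)..1, 1 / ((A + t ^ α) ^ β * (B + t) ^ η) ≤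
      2 * ∫ t in (0 : ℝ)..B + 1, ((A ^ β + t) * (B + t) ^ η)⁻¹ := by
  have ha : 0 < A ^ β := rpow_pos_of_pos hA β
  rw [← intervalIntegral.integral_const_mul]
  calc ∫ t in (0 : ℝ)..1, 1 / ((A + t ^ α) ^ β * (B + t) ^ η)
      ≤ ∫ t in (0 : ℝ)..1, 2 * ((A ^ β + t) * (B + t) ^ η)⁻¹ := by
        refine integral_mono_on_of_nonneg zero_le_one
          ((intervalIntegrable_inv_mul_rpow ha hB le_rfl zero_le_one).const_mul 2)
          (fun t ht ↦ ?_) fun t ht ↦ one_div_rpow_mul_rpow_le_two_mul hA.le hB.le ht.1 hβ hαβ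
        have := ht.1
        have : 0 < B + t := by linarith
        positivity
    _ ≤ ∫ t in (0 : ℝ)..B + 1, 2 * ((A ^ β + t) * (B + t) ^ η)⁻¹ := by
        refine integral_mono_interval le_rfl zero_le_one (by linarith)
          (ae_restrict_of_forall_mem measurableSet_Ioc fun t ht ↦ ?_)
          ((intervalIntegrable_inv_mul_rpow ha hB le_rfl (by linarith)).const_mul 2)
        have := ht.1
        positivity

theorem stmt_7_general (α β η : ℝ) (hβ : 0 < β) (hη : 0 < η) (hαβ : α * β = 1) :
    ∃ c₁ c₂ : ℝ, 0 < c₁ ∧ 0 < c₂ ∧ ∀ A B : ℝ, 0 < A → 0 < B → A ^ (1 / α) ≤ c₁ * B →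
      (∫ t in (0:ℝ)..1, 1 / ((A + t ^ α) ^ β * (B + t) ^ η)) ≤
        c₂ / B ^ η * Real.log (1 + B * A ^ (-(1 / α))) := by
  have hβα : 1 / α = β := (eq_one_div_of_mul_eq_one_right hαβ).symm
  have hlog2 : 0 < log 2 := log_pos one_lt_two
  refine ⟨1, 2 + 2 / (η * log 2), one_pos, by positivity, fun A B hA hB hAB ↦ ?_⟩
  rw [one_mul, hβα] at hAB
  rw [hβα, rpow_neg hA.le, ← div_eq_mul_inv]
  have hL : log 2 ≤ log (1 + B / A ^ β) :=
    log_le_log two_pos (by linarith [(one_le_div (rpow_pos_of_pos hA β)).2 hAB])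
  calc (∫ t in (0:ℝ)..1, 1 / ((A + t ^ α) ^ β * (B + t) ^ η))
      ≤ 2 * ∫ t in (0 : ℝ)..B + 1, ((A ^ β + t) * (B + t) ^ η)⁻¹ :=
        integral_le_two_mul_integral_inv_mul_rpow hA hB hβ.le hαβ
    _ ≤ 2 * ((log (1 + B / A ^ β) + 1 / η) / B ^ η) := by
        gcongr
        exact integral_inv_mul_rpow_le (rpow_pos_of_pos hA β) hAB hη
    _ ≤ 2 * ((log (1 + B / A ^ β) + log (1 + B / A ^ β) / (η * log 2)) / B ^ η) := by
        gcongr 2 * ((_ + ?_) / _)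
        rw [div_le_div_iff₀ hη (by positivity)]
        nlinarith
    _ = (2 + 2 / (η * log 2)) / B ^ η * log (1 + B / A ^ β) := by ring

theorem stmt_7 (α β η : ℝ) (hα : 0 < α) (hβ : 0 < β) (hη : 0 < η) (hαβ : α * β = 1) :
    ∃ c₁ c₂ : ℝ, 0 < c₁ ∧ 0 < c₂ ∧ ∀ A B : ℝ, 0 < A → 0 < B → A ^ (1 / α) ≤ c₁ * B →
      (∫ t in (0:ℝ)..1, 1 / ((A + t ^ α) ^ β * (B + t) ^ η)) ≤
        c₂ / B ^ η * Real.log (1 + B * A ^ (-(1 / α))) :=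
  stmt_7_general α β η hβ hη hαβ
end

section
/- Let α, β, η > 0 with 0 < αβ < 1 and αβ + η ≠ 1, and let J(A,B) = ∫_0^1 dt / ((A + t^α)^β (B + t)^η). Then there exist finite constants c₁, c₂ depending only on α, β, η such that for all A, B > 0 with A^{1/α} ≤ c₁ B, J(A,B) ≤ c₂(B^{-(αβ+η-1)} + 1). -/
open MeasureTheory intervalIntegral

/-! Since `(A + t^α)^β ≥ t^(αβ)`, the integrand is at most `t^(-αβ) u^(-η)` whenever
`0 < u ≤ B + t`. For `B ≥ 1` take `u = 1`; otherwise split `[0, 1]` at `B`, taking `u = B` on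
`[0, B]` and `u = t` on `[B, 1]`. The first piece is `B^(1-αβ-η)/(1-αβ)` and the second is
`∫_B^1 t^(-(αβ+η))`, which is `O(B^(1-αβ-η) + 1)` because `αβ + η ≠ 1`. -/

section

variable {α β η A B : ℝ}

lemma integrand_le_rpow_mul_rpow (hβ : 0 ≤ β) (hη : 0 ≤ η) (hA : 0 ≤ A) {t u : ℝ} (ht : 0 < t)
    (hu : 0 < u) (huB : u ≤ B + t) :
    1 / ((A + t ^ α) ^ β * (B + t) ^ η) ≤ t ^ (-(α * β)) * u ^ (-η) := by
  have hpow : t ^ (α * β) ≤ (A + t ^ α) ^ β := by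
    rw [Real.rpow_mul ht.le]
    exact Real.rpow_le_rpow (by positivity) (le_add_of_nonneg_left hA) hβ
  rw [Real.rpow_neg ht.le, Real.rpow_neg hu.le, ← mul_inv, one_div]
  exact inv_anti₀ (by positivity)
    (mul_le_mul hpow (Real.rpow_le_rpow hu.le huB hη) (by positivity) (by positivity))

lemma intervalIntegrable_integrand (hβ : 0 ≤ β) (hη : 0 ≤ η) (hαβ : α * β < 1) (hA : 0 ≤ A)
    (hB : 0 < B) {a b : ℝ} (ha : 0 ≤ a) (hb : 0 ≤ b) :
    IntervalIntegrable (fun t => 1 / ((A + t ^ α) ^ β * (B + t) ^ η)) volume a b := by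
  suffices h : ∀ b, 0 ≤ b →
      IntervalIntegrable (fun t => 1 / ((A + t ^ α) ^ β * (B + t) ^ η)) volume 0 b from
    (h a ha).symm.trans (h b hb)
  intro b hb
  refine ((intervalIntegrable_rpow' (r := -(α * β)) (by linarith)).mul_const (B ^ (-η))).mono_fun'
    (Measurable.aestronglyMeasurable (by fun_prop)) ?_
  rw [Set.uIoc_of_le hb]
  filter_upwards [ae_restrict_mem measurableSet_Ioc] with t ht
  obtain ⟨ht0, -⟩ := ht
  rw [Real.norm_of_nonneg (by positivity)]
  exact integrand_le_rpow_mul_rpow hβ hη hA ht0 hB (le_add_of_nonneg_right ht0.le)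

lemma integral_integrand_zero_le (hβ : 0 ≤ β) (hη : 0 ≤ η) (hαβ : α * β < 1) (hA : 0 ≤ A)
    {b u : ℝ} (hb : 0 ≤ b) (hu : 0 < u) (huB : u ≤ B) :
    ∫ t in (0:ℝ)..b, 1 / ((A + t ^ α) ^ β * (B + t) ^ η) ≤
      b ^ (1 - α * β) / (1 - α * β) * u ^ (-η) :=
  calc ∫ t in (0:ℝ)..b, 1 / ((A + t ^ α) ^ β * (B + t) ^ η)
      ≤ ∫ t in (0:ℝ)..b, t ^ (-(α * β)) * u ^ (-η) :=
        integral_mono_on_of_le_Ioo hb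
          (intervalIntegrable_integrand hβ hη hαβ hA (hu.trans_le huB) le_rfl hb)
          ((intervalIntegrable_rpow' (by linarith)).mul_const _)
          fun t ht => integrand_le_rpow_mul_rpow hβ hη hA ht.1 hu (by linarith [ht.1])
    _ = b ^ (1 - α * β) / (1 - α * β) * u ^ (-η) := by
        rw [intervalIntegral.integral_mul_const, integral_rpow (Or.inl (by linarith)),
          Real.zero_rpow (by linarith : -(α * β) + 1 ≠ 0), sub_zero, neg_add_eq_sub]

lemma integral_rpow_neg_le_s8 {K B : ℝ} (hK : K ≠ 1) (hB : 0 < B) (hB1 : B ≤ 1) :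
    ∫ t in B..1, t ^ (-K) ≤ (B ^ (-(K - 1)) + 1) * |K - 1|⁻¹ := by
  have h0 : (0:ℝ) ∉ Set.uIcc B 1 := by
    rw [Set.uIcc_of_le hB1]
    exact fun h => hB.not_ge h.1
  have hx : 0 ≤ B ^ (-(K - 1)) := by positivity
  rw [integral_rpow (Or.inr ⟨fun h => hK (by linarith), h0⟩), Real.one_rpow,
    show -K + 1 = -(K - 1) by ring]
  calc (1 - B ^ (-(K - 1))) / -(K - 1)
      ≤ |1 - B ^ (-(K - 1))| / |K - 1| := by
        rw [← abs_neg (K - 1), ← abs_div]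
        exact le_abs_self _
    _ ≤ (B ^ (-(K - 1)) + 1) * |K - 1|⁻¹ := by
        rw [div_eq_mul_inv]
        gcongr
        exact abs_sub_le_iff.2 ⟨by linarith, by linarith⟩

lemma integral_integrand_self_one_le (hβ : 0 ≤ β) (hη : 0 ≤ η) (hαβ : α * β < 1)
    (hne : α * β + η ≠ 1) (hA : 0 ≤ A) (hB : 0 < B) (hB1 : B ≤ 1) :
    ∫ t in B..1, 1 / ((A + t ^ α) ^ β * (B + t) ^ η) ≤
      (B ^ (-(α * β + η - 1)) + 1) * |α * β + η - 1|⁻¹ := by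
  have h0 : (0:ℝ) ∉ Set.uIcc B 1 := by
    rw [Set.uIcc_of_le hB1]
    exact fun h => hB.not_ge h.1
  refine le_trans (integral_mono_on_of_le_Ioo hB1
    (intervalIntegrable_integrand hβ hη hαβ hA hB hB.le zero_le_one)
    (intervalIntegrable_rpow (Or.inr h0)) fun t ht => ?_) (integral_rpow_neg_le_s8 hne hB hB1)
  have ht0 : 0 < t := hB.trans ht.1
  rw [neg_add, Real.rpow_add ht0]
  exact integrand_le_rpow_mul_rpow hβ hη hA ht0 ht0 (le_add_of_nonneg_left hB.le)

end

theorem stmt_8_general (α β η : ℝ) (hβ : 0 < β) (hη : 0 < η)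
    (hαβ : α * β < 1) (hne : α * β + η ≠ 1) :
    ∃ c₁ c₂ : ℝ, 0 < c₁ ∧ 0 < c₂ ∧ ∀ A B : ℝ, 0 < A → 0 < B → A ^ (1 / α) ≤ c₁ * B →
      (∫ t in (0:ℝ)..1, 1 / ((A + t ^ α) ^ β * (B + t) ^ η)) ≤
        c₂ * (B ^ (-(α * β + η - 1)) + 1) := by
  have ha : 0 < (1 - α * β)⁻¹ := inv_pos.2 (by linarith)
  refine ⟨1, (1 - α * β)⁻¹ + |α * β + η - 1|⁻¹, one_pos, by positivity,
    fun A B hA hB _ => ?_⟩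
  have hx : 0 ≤ B ^ (-(α * β + η - 1)) := by positivity
  have hc : 0 ≤ |α * β + η - 1|⁻¹ := by positivity
  rcases le_or_gt 1 B with hB1 | hB1
  · have h := integral_integrand_zero_le hβ.le hη.le hαβ hA.le zero_le_one one_pos hB1
    rw [Real.one_rpow, Real.one_rpow, one_div, mul_one] at h
    nlinarith
  · have hB_exp : B ^ (1 - α * β) / (1 - α * β) * B ^ (-η) =
        B ^ (-(α * β + η - 1)) * (1 - α * β)⁻¹ := by
      rw [div_eq_mul_inv, mul_right_comm, ← Real.rpow_add hB]
      ring_nf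
    have h₁ :=
      (integral_integrand_zero_le hβ.le hη.le hαβ hA.le hB.le hB le_rfl).trans_eq hB_exp
    have h₂ := integral_integrand_self_one_le hβ.le hη.le hαβ hne hA.le hB hB1.le
    rw [← integral_add_adjacent_intervals
      (intervalIntegrable_integrand hβ.le hη.le hαβ hA.le hB le_rfl hB.le)
      (intervalIntegrable_integrand hβ.le hη.le hαβ hA.le hB hB.le zero_le_one)]
    nlinarith

theorem stmt_8 (α β η : ℝ) (hα : 0 < α) (hβ : 0 < β) (hη : 0 < η)
    (hαβ : α * β < 1) (hne : α * β + η ≠ 1) :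
    ∃ c₁ c₂ : ℝ, 0 < c₁ ∧ 0 < c₂ ∧ ∀ A B : ℝ, 0 < A → 0 < B → A ^ (1 / α) ≤ c₁ * B →
      (∫ t in (0:ℝ)..1, 1 / ((A + t ^ α) ^ β * (B + t) ^ η)) ≤
        c₂ * (B ^ (-(α * β + η - 1)) + 1) :=
  stmt_8_general α β η hβ hη hαβ hne
end

section
/- Let (ρ₁,…,ρ_N) ∈ (0,1)^N and let q ∈ [0, ∑_{ℓ=1}^N ρ_ℓ^{-1}). Let τ ∈ {1,…,N} be the unique integer with ∑_{ℓ=1}^{τ-1} 1/ρ_ℓ ≤ q < ∑_{ℓ=1}^τ 1/ρ_ℓ (with the convention ∑_{ℓ=1}^0 1/ρ_ℓ = 0). Then there exists Δ_τ ∈ (0,1] depending only on (ρ₁,…,ρ_N) such that for every Δ ∈ (0, Δ_τ) there exist real numbers p_ℓ ≥ 1 (1 ≤ ℓ ≤ τ) with ∑_{ℓ=1}^τ 1/p_ℓ = 1, ρ_ℓ q / p_ℓ < 1 for all ℓ = 1,…,τ, and (1-Δ)∑_{ℓ=1}^τ ρ_ℓ q / p_ℓ ≤ ρ_τ q + τ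 - ∑_{ℓ=1}^τ ρ_τ/ρ_ℓ. -/
/-!
Write `τ = t + 1`, `S = ∑_{ℓ < t} 1/ρ_ℓ` and `r = ρ_t`, so that `S ≤ q < S + 1/r`. For `a < 1`
take `p_ℓ = ρ_ℓ q / a` for `ℓ < t` and `p_t = q / (q - a S)`: the reciprocals sum to
`a S / q + (q - a S) / q = 1`, the loads `ρ_ℓ q / p_ℓ` equal `a` for `ℓ < t` and `r (q - a S)` for
`ℓ = t`, and their sum is `t a + r (q - a S)`. At `a = 1` the last load is `r (q - S) < 1` and the
sum is exactly `t + r (q - S)`, which is the right-hand side of the claimed inequality. Both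
conditions are open in `a`, so they survive for `a` slightly below `1`, where the factor `1 - Δ`
absorbs the error. Hence `Δ_τ = 1` works.
-/

open Finset Filter Topology

namespace HolderExponents

variable {ρ : ℕ → ℝ} {q a : ℝ} {t : ℕ}

variable (ρ q a t) in
noncomputable def exponent (ℓ : ℕ) : ℝ :=
  if ℓ < t then ρ ℓ * q / a else q / (q - a * ∑ i ∈ range t, 1 / ρ i)

theorem one_le_mul_of_sum_inv_le (hρ : ∀ ℓ < t, 0 < ρ ℓ) (hS : ∑ i ∈ range t, 1 / ρ i ≤ q)
    {ℓ : ℕ} (hℓ : ℓ < t) : 1 ≤ ρ ℓ * q := by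
  have hinv : 1 / ρ ℓ ≤ q :=
    (single_le_sum (f := fun i => 1 / ρ i) (fun i hi => (one_div_pos.2 (hρ i (mem_range.1 hi))).le)
      (mem_range.2 hℓ)).trans hS
  rwa [div_le_iff₀ (hρ ℓ hℓ), mul_comm] at hinv

theorem mul_sum_inv_lt (hq : 0 < q) (hS : ∑ i ∈ range t, 1 / ρ i ≤ q) (ha0 : 0 < a)
    (ha1 : a < 1) : a * ∑ i ∈ range t, 1 / ρ i < q :=
  (mul_le_mul_of_nonneg_left hS ha0.le).trans_lt (mul_lt_of_lt_one_left hq ha1)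

theorem one_le_exponent (hρ : ∀ ℓ < t, 0 < ρ ℓ) (hq : 0 < q) (hS : ∑ i ∈ range t, 1 / ρ i ≤ q)
    (ha0 : 0 < a) (ha1 : a < 1) (ℓ : ℕ) : 1 ≤ exponent ρ q a t ℓ := by
  unfold exponent
  split_ifs with hlt
  · rw [le_div_iff₀ ha0, one_mul]
    exact ha1.le.trans (one_le_mul_of_sum_inv_le hρ hS hlt)
  · have hS0 : 0 ≤ ∑ i ∈ range t, 1 / ρ i :=
      sum_nonneg fun i hi => (one_div_pos.2 (hρ i (mem_range.1 hi))).le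
    rw [le_div_iff₀ (sub_pos.2 (mul_sum_inv_lt hq hS ha0 ha1)), one_mul]
    exact sub_le_self q (mul_nonneg ha0.le hS0)

theorem sum_inv_exponent (hq : q ≠ 0) :
    ∑ ℓ ∈ range (t + 1), 1 / exponent ρ q a t ℓ = 1 := by
  have hlt : ∀ ℓ ∈ range t, 1 / exponent ρ q a t ℓ = a / q * (1 / ρ ℓ) := fun ℓ hℓ => by
    simp only [exponent, if_pos (mem_range.1 hℓ)]
    field_simp
  rw [sum_range_succ, sum_congr rfl hlt, ← mul_sum]
  simp only [exponent, lt_irrefl, if_false]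
  field_simp
  ring

theorem load_exponent_of_lt (hρ : ρ ℓ ≠ 0) (hq : q ≠ 0) (hℓ : ℓ < t) :
    ρ ℓ * q / exponent ρ q a t ℓ = a := by
  rw [exponent, if_pos hℓ, div_div_cancel₀ (mul_ne_zero hρ hq)]

theorem load_exponent_self (hq : q ≠ 0) :
    ρ t * q / exponent ρ q a t t = ρ t * (q - a * ∑ i ∈ range t, 1 / ρ i) := by
  rw [exponent, if_neg (lt_irrefl t), mul_div_assoc, div_div_cancel₀ hq]

theorem sum_load_exponent (hρ : ∀ ℓ < t, ρ ℓ ≠ 0) (hq : q ≠ 0) :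
    ∑ ℓ ∈ range (t + 1), ρ ℓ * q / exponent ρ q a t ℓ =
      t * a + ρ t * (q - a * ∑ i ∈ range t, 1 / ρ i) := by
  rw [sum_range_succ, load_exponent_self hq,
    sum_congr rfl fun ℓ hℓ => load_exponent_of_lt (hρ ℓ (mem_range.1 hℓ)) hq (mem_range.1 hℓ),
    sum_const, card_range, nsmul_eq_mul]

theorem sum_div_range_succ (hρt : ρ t ≠ 0) :
    ∑ ℓ ∈ range (t + 1), ρ t / ρ ℓ = ρ t * ∑ i ∈ range t, 1 / ρ i + 1 := by
  rw [sum_range_succ, div_self hρt, mul_sum]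
  simp only [mul_one_div]

theorem eventually_load_lt {r S Δ : ℝ} (hlast : r * (q - S) < 1) (hΔ : 0 < Δ)
    (hR : 0 < t + r * (q - S)) :
    ∀ᶠ a in 𝓝[<] 1, a ∈ Set.Ioo 0 1 ∧ r * (q - a * S) < 1 ∧
      (1 - Δ) * (t * a + r * (q - a * S)) < t + r * (q - S) := by
  have hcont : Continuous fun a : ℝ => r * (q - a * S) := by fun_prop
  have hcont' : Continuous fun a : ℝ => (1 - Δ) * (t * a + r * (q - a * S)) := by fun_prop
  have hIoo : ∀ᶠ a in 𝓝[<] (1 : ℝ), a ∈ Set.Ioo 0 1 := Ioo_mem_nhdsLT one_pos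
  refine hIoo.and (Eventually.and ?_ ?_) <;> apply eventually_nhdsWithin_of_eventually_nhds
  · exact hcont.continuousAt.eventually_lt continuousAt_const (by simpa using hlast)
  · refine hcont'.continuousAt.eventually_lt continuousAt_const ?_
    simp only [one_mul, mul_one]
    nlinarith

theorem exists_exponents (hρ : ∀ ℓ ≤ t, 0 < ρ ℓ) (ht : 0 < t)
    (hlow : ∑ ℓ ∈ range t, 1 / ρ ℓ ≤ q) (hhigh : q < ∑ ℓ ∈ range t, 1 / ρ ℓ + 1 / ρ t)
    {Δ : ℝ} (hΔ : 0 < Δ) :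
    ∃ p : ℕ → ℝ, (∀ ℓ, 1 ≤ p ℓ) ∧ ∑ ℓ ∈ range (t + 1), 1 / p ℓ = 1 ∧
      (∀ ℓ < t + 1, ρ ℓ * q / p ℓ < 1) ∧
      (1 - Δ) * ∑ ℓ ∈ range (t + 1), ρ ℓ * q / p ℓ ≤
        t + ρ t * (q - ∑ ℓ ∈ range t, 1 / ρ ℓ) := by
  have hρ' : ∀ ℓ < t, 0 < ρ ℓ := fun ℓ hℓ => hρ ℓ hℓ.le
  have hq : 0 < q :=
    pos_of_mul_pos_right (one_pos.trans_le (one_le_mul_of_sum_inv_le hρ' hlow ht)) (hρ' 0 ht).le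
  have hlast : ρ t * (q - ∑ ℓ ∈ range t, 1 / ρ ℓ) < 1 :=
    (lt_div_iff₀' (hρ t le_rfl)).1 (by linarith)
  have hR : 0 < t + ρ t * (q - ∑ ℓ ∈ range t, 1 / ρ ℓ) := by
    have ht' : (1 : ℝ) ≤ t := by exact_mod_cast ht
    nlinarith [mul_nonneg (hρ t le_rfl).le (sub_nonneg.2 hlow)]
  obtain ⟨a, ⟨ha0, ha1⟩, hlast_a, hsum_a⟩ := (eventually_load_lt hlast hΔ hR).exists
  refine ⟨exponent ρ q a t, one_le_exponent hρ' hq hlow ha0 ha1, sum_inv_exponent hq.ne',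
    fun ℓ hℓ => ?_, ?_⟩
  · rcases Nat.lt_succ_iff_lt_or_eq.1 hℓ with hℓ | rfl
    · rw [load_exponent_of_lt (hρ' ℓ hℓ).ne' hq.ne' hℓ]
      exact ha1
    · rw [load_exponent_self hq.ne']
      exact hlast_a
  · rw [sum_load_exponent (fun ℓ hℓ => (hρ' ℓ hℓ).ne') hq.ne']
    exact hsum_a.le

end HolderExponents

open HolderExponents

theorem stmt_12_general (N : ℕ) (ρ : ℕ → ℝ) (hρ : ∀ ℓ < N, 0 < ρ ℓ ∧ ρ ℓ < 1)
    (q : ℝ) (hq0 : 0 ≤ q)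
    (τ : ℕ) (hτ1 : 1 ≤ τ) (hτN : τ ≤ N)
    (hτlow : ∑ ℓ ∈ range (τ - 1), 1 / ρ ℓ ≤ q) (hτhigh : q < ∑ ℓ ∈ range τ, 1 / ρ ℓ) :
    ∃ Δτ : ℝ, 0 < Δτ ∧ Δτ ≤ 1 ∧ ∀ Δ : ℝ, 0 < Δ → Δ < Δτ →
      ∃ p : ℕ → ℝ, (∀ ℓ < τ, 1 ≤ p ℓ) ∧ (∑ ℓ ∈ range τ, 1 / p ℓ) = 1 ∧
        (∀ ℓ < τ, ρ ℓ * q / p ℓ < 1) ∧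
        (1 - Δ) * ∑ ℓ ∈ range τ, ρ ℓ * q / p ℓ ≤
          ρ (τ - 1) * q + τ - ∑ ℓ ∈ range τ, ρ (τ - 1) / ρ ℓ := by
  refine ⟨1, one_pos, le_rfl, fun Δ hΔ _ => ?_⟩
  obtain ⟨t, rfl⟩ : ∃ t, τ = t + 1 := ⟨τ - 1, by omega⟩
  rw [Nat.add_sub_cancel] at hτlow ⊢
  rw [sum_range_succ] at hτhigh
  have hρ' : ∀ ℓ ≤ t, 0 < ρ ℓ := fun ℓ hℓ => (hρ ℓ (by omega)).1
  rcases t.eq_zero_or_pos with rfl | ht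
  -- For `τ = 1` the construction degenerates when `q = 0`, but `p = 1` works directly.
  · have hρq : ρ 0 * q < 1 := by
      simpa [mul_comm, ← lt_div_iff₀ (hρ' 0 le_rfl)] using hτhigh
    refine ⟨fun _ => 1, by simp, by simp, by simpa using hρq, ?_⟩
    simp only [zero_add, range_one, div_one, sum_singleton, Nat.cast_one,
      div_self (hρ' 0 le_rfl).ne', add_sub_cancel_right]
    nlinarith [mul_nonneg (hρ' 0 le_rfl).le hq0]
  obtain ⟨p, hp1, hpsum, hpload, hpobj⟩ := exists_exponents hρ' ht hτlow hτhigh hΔ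
  refine ⟨p, fun ℓ _ => hp1 ℓ, hpsum, hpload, ?_⟩
  rw [sum_div_range_succ (hρ' t le_rfl).ne']
  push_cast
  linarith

theorem stmt_12 (N : ℕ) (hN : 1 ≤ N) (ρ : ℕ → ℝ) (hρ : ∀ ℓ < N, 0 < ρ ℓ ∧ ρ ℓ < 1)
    (q : ℝ) (hq0 : 0 ≤ q) (hq1 : q < ∑ ℓ ∈ range N, 1 / ρ ℓ)
    (τ : ℕ) (hτ1 : 1 ≤ τ) (hτN : τ ≤ N)
    (hτlow : ∑ ℓ ∈ range (τ - 1), 1 / ρ ℓ ≤ q) (hτhigh : q < ∑ ℓ ∈ range τ, 1 / ρ ℓ) :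
    ∃ Δτ : ℝ, 0 < Δτ ∧ Δτ ≤ 1 ∧ ∀ Δ : ℝ, 0 < Δ → Δ < Δτ →
      ∃ p : ℕ → ℝ, (∀ ℓ < τ, 1 ≤ p ℓ) ∧ (∑ ℓ ∈ range τ, 1 / p ℓ) = 1 ∧
        (∀ ℓ < τ, ρ ℓ * q / p ℓ < 1) ∧
        (1 - Δ) * ∑ ℓ ∈ range τ, ρ ℓ * q / p ℓ ≤
          ρ (τ - 1) * q + τ - ∑ ℓ ∈ range τ, ρ (τ - 1) / ρ ℓ :=
  stmt_12_general N ρ hρ q hq0 τ hτ1 hτN hτlow hτhigh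
end

section
/- With the notation and conclusions of Lemma 2.10: set α_τ := ∑_{ℓ=1}^τ 1/ρ_ℓ - q > 0. Then for any ρ ∈ (0, α_τ/(2τ)), there exists ℓ₀ ∈ {1,…,τ} such that ρ_{ℓ₀} q / p_{ℓ₀} + 2 ρ_{ℓ₀} ρ < 1. -/
/-! Since `∑ 1/p_ℓ = 1`, the terms `q/p_ℓ + 2ρ'` sum to `q + 2τρ' < ∑ 1/ρ_ℓ`, so at some `ℓ₀`
`q/p_ℓ₀ + 2ρ' < 1/ρ_ℓ₀`; multiply by `ρ_ℓ₀`. -/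

open Finset

theorem exists_mul_div_add_mul_lt_one {ι : Type*} (s : Finset ι) (ρ p : ι → ℝ) (q c : ℝ)
    (hρ : ∀ i ∈ s, 0 < ρ i) (hp : ∑ i ∈ s, 1 / p i = 1)
    (hc : #s * c < (∑ i ∈ s, 1 / ρ i) - q) :
    ∃ i ∈ s, ρ i * q / p i + ρ i * c < 1 := by
  have hsum : ∑ i ∈ s, (q * (1 / p i) + c) < ∑ i ∈ s, 1 / ρ i := by
    rw [sum_add_distrib, ← mul_sum, hp, sum_const, nsmul_eq_mul]
    linarith
  obtain ⟨i, hi, hlt⟩ := exists_lt_of_sum_lt hsum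
  refine ⟨i, hi, ?_⟩
  have hρi := hρ i hi
  calc ρ i * q / p i + ρ i * c = ρ i * (q * (1 / p i) + c) := by ring
    _ < ρ i * (1 / ρ i) := mul_lt_mul_of_pos_left hlt hρi
    _ = 1 := mul_one_div_cancel hρi.ne'

theorem stmt_13_general (N : ℕ) (ρ : ℕ → ℝ) (hρ : ∀ ℓ < N, 0 < ρ ℓ ∧ ρ ℓ < 1)
    (q : ℝ)
    (τ : ℕ) (hτ1 : 1 ≤ τ) (hτN : τ ≤ N)
    (hτhigh : q < ∑ ℓ ∈ range τ, 1 / ρ ℓ)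
    (p : ℕ → ℝ) (hpsum : (∑ ℓ ∈ range τ, 1 / p ℓ) = 1) :
    0 < (∑ ℓ ∈ range τ, 1 / ρ ℓ) - q ∧
      ∀ ρ' : ℝ, 0 < ρ' → ρ' < ((∑ ℓ ∈ range τ, 1 / ρ ℓ) - q) / (2 * τ) →
        ∃ ℓ₀ < τ, ρ ℓ₀ * q / p ℓ₀ + 2 * ρ ℓ₀ * ρ' < 1 := by
  refine ⟨sub_pos.mpr hτhigh, fun ρ' _ hρ' => ?_⟩
  have hτpos : (0 : ℝ) < 2 * τ := by positivity
  have hbudget : #(range τ) * (2 * ρ') < (∑ ℓ ∈ range τ, 1 / ρ ℓ) - q := by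
    rw [card_range]
    linarith [(lt_div_iff₀ hτpos).mp hρ']
  obtain ⟨ℓ₀, hℓ₀, hlt⟩ := exists_mul_div_add_mul_lt_one (range τ) ρ p q (2 * ρ')
    (fun ℓ hℓ => (hρ ℓ ((mem_range.mp hℓ).trans_le hτN)).1) hpsum hbudget
  exact ⟨ℓ₀, mem_range.mp hℓ₀, by linarith⟩

theorem stmt_13 (N : ℕ) (hN : 1 ≤ N) (ρ : ℕ → ℝ) (hρ : ∀ ℓ < N, 0 < ρ ℓ ∧ ρ ℓ < 1)
    (q : ℝ) (hq0 : 0 ≤ q) (hq1 : q < ∑ ℓ ∈ range N, 1 / ρ ℓ)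
    (τ : ℕ) (hτ1 : 1 ≤ τ) (hτN : τ ≤ N)
    (hτlow : ∑ ℓ ∈ range (τ - 1), 1 / ρ ℓ ≤ q) (hτhigh : q < ∑ ℓ ∈ range τ, 1 / ρ ℓ)
    (p : ℕ → ℝ) (hp1 : ∀ ℓ < τ, 1 ≤ p ℓ) (hpsum : (∑ ℓ ∈ range τ, 1 / p ℓ) = 1)
    (hpq : ∀ ℓ < τ, ρ ℓ * q / p ℓ < 1) :
    0 < (∑ ℓ ∈ range τ, 1 / ρ ℓ) - q ∧
      ∀ ρ' : ℝ, 0 < ρ' → ρ' < ((∑ ℓ ∈ range τ, 1 / ρ ℓ) - q) / (2 * τ) →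
        ∃ ℓ₀ < τ, ρ ℓ₀ * q / p ℓ₀ + 2 * ρ ℓ₀ * ρ' < 1 :=
  stmt_13_general N ρ hρ q τ hτ1 hτN hτhigh p hpsum
end

section
/- Let 0 < ε < Λ and β'_j ≤ β_j be numbers in [α, γ] ⊂ (0,1). Then there is a finite constant c depending only on α, γ, ε, Λ such that ∫_{-∞}^0 [((t-u)^{β_j-1/2} - (-u)^{β_j-1/2}) - ((t-u)^{β'_j-1/2} - (-u)^{β'_j-1/2})]^2 du ≤ c |β_j - β'_j|^2 for all t ∈ [ε, Λ]. -/
/-!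
By the mean value theorem in the Hurst index, the integrand is at most `|β - β'|² G(-u)²` for any
`G` bounding `∂_H` of the kernel, i.e. `|(t + x)^(H-1/2) log (t + x) - x^(H-1/2) log x|` with
`x = -u`, uniformly in `H ∈ [α, γ]` and `t ∈ [ε, Λ]`. Near `x = 0` the first term is bounded by
compactness and the second by `x^(η-1/2)/η`; for large `x` a second mean value theorem, now in the
base, gives the decay `x^(-η-1/2)`. With `2η ≤ min α (1 - γ)` both make `G` square integrable.
-/

open MeasureTheory

namespace MvnKernel

open Real Set

/-- The past part `(t - u)^(H - 1/2) - (-u)^(H - 1/2)` of the Mandelbrot–Van Ness kernel of fBm,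
in the variable `x = -u > 0`. -/
noncomputable def past (H t x : ℝ) : ℝ := (t + x) ^ (H - 1 / 2) - x ^ (H - 1 / 2)

theorem hasDerivAt_past {t x : ℝ} (hx : 0 < x) (ht : 0 < t + x) (H : ℝ) :
    HasDerivAt (fun H => past H t x)
      ((t + x) ^ (H - 1 / 2) * log (t + x) - x ^ (H - 1 / 2) * log x) H := by
  have hexp : HasDerivAt (fun H : ℝ => H - 1 / 2) 1 H := (hasDerivAt_id H).sub_const _
  exact ((hexp.const_rpow ht).sub (hexp.const_rpow hx)).congr_deriv (by ring)

theorem abs_past_sub_le {β β' t x M : ℝ} (hx : 0 < x) (ht : 0 < t + x) (hβ : β' ≤ β)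
    (hM : ∀ H ∈ Icc β' β, |(t + x) ^ (H - 1 / 2) * log (t + x) - x ^ (H - 1 / 2) * log x| ≤ M) :
    |past β t x - past β' t x| ≤ M * (β - β') :=
  norm_image_sub_le_of_norm_deriv_le_segment'
    (fun H _ => (hasDerivAt_past hx ht H).hasDerivWithinAt)
    (fun H hH => hM H (Ico_subset_Icc_self hH)) β (right_mem_Icc.2 hβ)

theorem exists_abs_rpow_mul_log_le {a b e₁ e₂ : ℝ} (ha : 0 < a) :
    ∃ K, ∀ e ∈ Icc e₁ e₂, ∀ y ∈ Icc a b, |y ^ e * log y| ≤ K := by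
  have hcont : ContinuousOn (fun p : ℝ × ℝ => p.2 ^ p.1 * log p.2) (Icc e₁ e₂ ×ˢ Icc a b) :=
    fun p hp =>
      have hp₂ : p.2 ≠ 0 := (ha.trans_le hp.2.1).ne'
      ((continuousAt_snd.rpow continuousAt_fst (Or.inl hp₂)).mul
        (continuousAt_snd.log hp₂)).continuousWithinAt
  obtain ⟨K, hK⟩ := (isCompact_Icc.prod isCompact_Icc).exists_bound_of_continuousOn hcont
  exact ⟨K, fun e he y hy => hK (e, y) ⟨he, hy⟩⟩

theorem abs_log_le_rpow_neg_div {x δ : ℝ} (hx₀ : 0 < x) (hx₁ : x ≤ 1) (hδ : 0 < δ) :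
    |log x| ≤ x ^ (-δ) / δ := by
  rw [abs_of_nonpos (log_nonpos hx₀.le hx₁), ← log_inv, rpow_neg hx₀.le, ← inv_rpow hx₀.le]
  exact log_le_rpow_div (inv_nonneg.2 hx₀.le) hδ

theorem abs_rpow_mul_log_le_of_le_one {x e p δ : ℝ} (hx₀ : 0 < x) (hx₁ : x ≤ 1) (hδ : 0 < δ)
    (hpe : p ≤ e) : |x ^ e * log x| ≤ x ^ (p - δ) / δ := by
  rw [abs_mul, abs_of_nonneg (rpow_nonneg hx₀.le e), sub_eq_add_neg, rpow_add hx₀, mul_div_assoc]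
  exact mul_le_mul (rpow_le_rpow_of_exponent_ge hx₀ hx₁ hpe) (abs_log_le_rpow_neg_div hx₀ hx₁ hδ)
    (abs_nonneg _) (rpow_nonneg hx₀.le p)

theorem hasDerivAt_rpow_mul_log {y : ℝ} (hy : 0 < y) (e : ℝ) :
    HasDerivAt (fun y => y ^ e * log y) (y ^ (e - 1) * (e * log y + 1)) y := by
  refine ((hasDerivAt_rpow_const (p := e) (Or.inl hy.ne')).mul
    (hasDerivAt_log hy.ne')).congr_deriv ?_
  rw [rpow_sub_one hy.ne']
  field_simp

theorem log_add_one_le_rpow {y δ : ℝ} (hy : 1 ≤ y) (hδ : 0 < δ) :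
    log y + 1 ≤ (1 + 1 / δ) * y ^ δ := by
  have hlog : log y ≤ y ^ δ / δ := log_le_rpow_div (zero_le_one.trans hy) hδ
  have hone : 1 ≤ y ^ δ := one_le_rpow hy hδ.le
  rw [div_eq_mul_one_div] at hlog
  linarith

theorem abs_deriv_rpow_mul_log_le {y e q δ : ℝ} (hy : 1 ≤ y) (he : |e| ≤ 1) (heq : e ≤ q)
    (hδ : 0 < δ) : |y ^ (e - 1) * (e * log y + 1)| ≤ (1 + 1 / δ) * y ^ (q + δ - 1) := by
  have hy₀ : 0 < y := zero_lt_one.trans_le hy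
  have hlog : 0 ≤ log y := log_nonneg hy
  have hfactor : |e * log y + 1| ≤ log y + 1 := by
    calc |e * log y + 1| ≤ |e| * log y + 1 := by
          simpa [abs_mul, abs_of_nonneg hlog] using abs_add_le (e * log y) 1
      _ ≤ log y + 1 := by nlinarith
  calc |y ^ (e - 1) * (e * log y + 1)| ≤ y ^ (q - 1) * (log y + 1) := by
        rw [abs_mul, abs_of_nonneg (rpow_nonneg hy₀.le _)]
        exact mul_le_mul (rpow_le_rpow_of_exponent_le hy (by linarith)) hfactor (abs_nonneg _)
          (rpow_nonneg hy₀.le _)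
    _ ≤ y ^ (q - 1) * ((1 + 1 / δ) * y ^ δ) :=
        mul_le_mul_of_nonneg_left (log_add_one_le_rpow hy hδ) (rpow_nonneg hy₀.le _)
    _ = (1 + 1 / δ) * y ^ (q + δ - 1) := by
        rw [show q + δ - 1 = q - 1 + δ by ring, rpow_add hy₀]
        ring

theorem abs_rpow_mul_log_add_sub_le {x t e q δ : ℝ} (hx : 1 ≤ x) (ht : 0 ≤ t) (he : |e| ≤ 1)
    (heq : e ≤ q) (hδ : 0 < δ) (hqδ : q + δ ≤ 1) :
    |(t + x) ^ e * log (t + x) - x ^ e * log x| ≤ (1 + 1 / δ) * x ^ (q + δ - 1) * t := by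
  have hx₀ : 0 < x := zero_lt_one.trans_le hx
  have hmvt := norm_image_sub_le_of_norm_deriv_le_segment' (a := x) (b := t + x)
    (f := fun y => y ^ e * log y) (C := (1 + 1 / δ) * x ^ (q + δ - 1))
    (fun y hy => (hasDerivAt_rpow_mul_log (hx₀.trans_le hy.1) e).hasDerivWithinAt)
    (fun y hy => by
      have hy₀ : 0 < y := hx₀.trans_le hy.1
      calc ‖y ^ (e - 1) * (e * log y + 1)‖ ≤ (1 + 1 / δ) * y ^ (q + δ - 1) :=
            abs_deriv_rpow_mul_log_le (hx.trans hy.1) he heq hδ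
        _ ≤ (1 + 1 / δ) * x ^ (q + δ - 1) :=
            mul_le_mul_of_nonneg_left
              (rpow_le_rpow_of_nonpos hx₀ hy.1 (by linarith)) (by positivity))
    (t + x) (right_mem_Icc.2 (by linarith))
  simpa using hmvt

theorem integrableOn_Ioi_piecewise_rpow {r s : ℝ} (hr : -1 < r) (hs : s < -1) :
    IntegrableOn (fun x : ℝ => if x ≤ 1 then x ^ r else x ^ s) (Ioi 0) := by
  rw [← Ioc_union_Ioi_eq_Ioi zero_le_one, integrableOn_union]
  exact ⟨(intervalIntegral.intervalIntegrable_rpow' hr).1.congr_fun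
      (fun x hx => (if_pos hx.2).symm) measurableSet_Ioc,
    (integrableOn_Ioi_rpow_of_lt hs one_pos).congr_fun
      (fun x hx => (if_neg (not_le.2 hx)).symm) measurableSet_Ioi⟩

theorem exists_sq_integrableOn_majorant {α γ ε Λ : ℝ} (hα : 0 < α) (hγ : γ < 1) (hε : 0 < ε) :
    ∃ G : ℝ → ℝ, IntegrableOn (fun x => G x ^ 2) (Ioi 0) ∧
      ∀ H ∈ Icc α γ, ∀ t ∈ Icc ε Λ, ∀ x, 0 < x →
        |(t + x) ^ (H - 1 / 2) * log (t + x) - x ^ (H - 1 / 2) * log x| ≤ G x := by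
  obtain ⟨η, hη, hηα, hηγ⟩ : ∃ η, 0 < η ∧ 2 * η ≤ α ∧ 2 * η ≤ 1 - γ :=
    ⟨min α (1 - γ) / 2, half_pos (lt_min hα (by linarith)),
      by linarith [min_le_left α (1 - γ)], by linarith [min_le_right α (1 - γ)]⟩
  obtain ⟨K, hK⟩ := exists_abs_rpow_mul_log_le (e₁ := α - 1 / 2) (e₂ := γ - 1 / 2) (b := Λ + 1) hε
  set A := max (K + 1 / η) (Λ * (1 + 1 / η))
  refine ⟨fun x => A * if x ≤ 1 then x ^ (η - 1 / 2) else x ^ (-η - 1 / 2), ?_, ?_⟩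
  · refine IntegrableOn.congr_fun ((integrableOn_Ioi_piecewise_rpow (r := 2 * η - 1)
      (s := -2 * η - 1) (by linarith) (by linarith)).const_mul (A ^ 2)) (fun x hx => ?_)
      measurableSet_Ioi
    dsimp only
    split_ifs <;> rw [mul_pow, ← rpow_mul_natCast (le_of_lt hx)] <;> push_cast <;> ring_nf
  intro H hH t ht x hx
  have hHe : |H - 1 / 2| ≤ 1 := abs_le.2 ⟨by linarith [hH.1], by linarith [hH.2]⟩
  dsimp only
  split_ifs with hx₁
  · have hKt : |(t + x) ^ (H - 1 / 2) * log (t + x)| ≤ K :=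
      hK _ ⟨by linarith [hH.1], by linarith [hH.2]⟩ _ ⟨by linarith [ht.1], by linarith [ht.2]⟩
    have hKx : |x ^ (H - 1 / 2) * log x| ≤ x ^ (η - 1 / 2) / η := by
      have := abs_rpow_mul_log_le_of_le_one (e := H - 1 / 2) (p := 2 * η - 1 / 2) hx hx₁ hη
        (by linarith [hH.1])
      rwa [show 2 * η - 1 / 2 - η = η - 1 / 2 by ring] at this
    have hK₀ : 0 ≤ K := (abs_nonneg _).trans hKt
    have hone : 1 ≤ x ^ (η - 1 / 2) :=
      one_le_rpow_of_pos_of_le_one_of_nonpos hx hx₁ (by linarith [hH.1, hH.2])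
    calc _ ≤ K + x ^ (η - 1 / 2) / η := (abs_sub _ _).trans (add_le_add hKt hKx)
      _ ≤ (K + 1 / η) * x ^ (η - 1 / 2) := by
          rw [add_mul, div_eq_mul_one_div, mul_comm (x ^ _)]
          nlinarith
      _ ≤ A * x ^ (η - 1 / 2) := mul_le_mul_of_nonneg_right (le_max_left _ _) (by positivity)
  · have hlarge := abs_rpow_mul_log_add_sub_le (le_of_not_ge hx₁) (hε.le.trans ht.1) hHe
      (q := 1 / 2 - 2 * η) (by linarith [hH.2]) hη (by linarith)
    rw [show 1 / 2 - 2 * η + η - 1 = -η - 1 / 2 by ring] at hlarge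
    calc _ ≤ (1 + 1 / η) * x ^ (-η - 1 / 2) * t := hlarge
      _ ≤ (1 + 1 / η) * x ^ (-η - 1 / 2) * Λ := mul_le_mul_of_nonneg_left ht.2 (by positivity)
      _ = Λ * (1 + 1 / η) * x ^ (-η - 1 / 2) := by ring
      _ ≤ A * x ^ (-η - 1 / 2) := mul_le_mul_of_nonneg_right (le_max_right _ _) (by positivity)

end MvnKernel

open MvnKernel Set in
theorem stmt_15_general (α γ ε Λ : ℝ) (hα : 0 < α) (hγ : γ < 1)
    (hε : 0 < ε) :
    ∃ c : ℝ, 0 < c ∧ ∀ β β' : ℝ, α ≤ β' → β' ≤ β → β ≤ γ →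
      ∀ t ∈ Set.Icc ε Λ,
        (∫ u in Set.Iio (0:ℝ),
            (((t - u) ^ (β - 1 / 2) - (-u) ^ (β - 1 / 2)) -
              ((t - u) ^ (β' - 1 / 2) - (-u) ^ (β' - 1 / 2))) ^ 2) ≤
          c * |β - β'| ^ 2 := by
  obtain ⟨G, hG_int, hG⟩ := exists_sq_integrableOn_majorant (Λ := Λ) hα hγ hε
  set I := ∫ x in Ioi (0 : ℝ), G x ^ 2
  have hI : 0 ≤ I := setIntegral_nonneg measurableSet_Ioi fun _ _ => sq_nonneg _
  refine ⟨I + 1, by positivity, fun β β' hαβ' hβ'β hβγ t ht => ?_⟩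
  have hpoint : ∀ x ∈ Ioi (0 : ℝ), (past β t x - past β' t x) ^ 2 ≤ |β - β'| ^ 2 * G x ^ 2 := by
    intro x hx
    have hdiff := abs_past_sub_le hx (by linarith [ht.1, mem_Ioi.1 hx]) hβ'β
      fun H hH => hG H ⟨hαβ'.trans hH.1, hH.2.trans hβγ⟩ t ht x hx
    rw [← sq_abs, ← mul_pow, mul_comm, abs_of_nonneg (sub_nonneg.2 hβ'β)]
    exact pow_le_pow_left₀ (abs_nonneg _) hdiff 2
  calc _ = ∫ x in Ioi (0 : ℝ), (past β t x - past β' t x) ^ 2 := by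
        rw [← integral_Iic_eq_integral_Iio, ← neg_zero, ← integral_comp_neg_Iic]
        simp only [past, ← sub_eq_add_neg, neg_zero]
    _ ≤ ∫ x in Ioi (0 : ℝ), |β - β'| ^ 2 * G x ^ 2 :=
        integral_mono_of_nonneg (ae_of_all _ fun _ => sq_nonneg _) (hG_int.const_mul _)
          ((ae_restrict_iff' measurableSet_Ioi).2 (ae_of_all _ hpoint))
    _ = |β - β'| ^ 2 * I := integral_const_mul _ _
    _ ≤ (I + 1) * |β - β'| ^ 2 := by nlinarith [sq_nonneg |β - β'|]

theorem stmt_15 (α γ ε Λ : ℝ) (hα : 0 < α) (hαγ : α ≤ γ) (hγ : γ < 1)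
    (hε : 0 < ε) (hεΛ : ε < Λ) :
    ∃ c : ℝ, 0 < c ∧ ∀ β β' : ℝ, α ≤ β' → β' ≤ β → β ≤ γ →
      ∀ t ∈ Set.Icc ε Λ,
        (∫ u in Set.Iio (0:ℝ),
            (((t - u) ^ (β - 1 / 2) - (-u) ^ (β - 1 / 2)) -
              ((t - u) ^ (β' - 1 / 2) - (-u) ^ (β' - 1 / 2))) ^ 2) ≤
          c * |β - β'| ^ 2 :=
  stmt_15_general α γ ε Λ hα hγ hε
end
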